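/- Let E be a small category and φ : Eᵒᵖ ⥤ Set a weight. For a finite category 𝒞 and a functor T : 𝒞 ⥤ E, let can_T : Colim_φ(e ↦ Cocones(T, e)) → Lifts(T) be the canonical map, where Cocones(T, e) is the set of cocones on T with vertex e and Lifts(T) is the set of functors K : 𝒞 ⥤ el(φ) with p ⋙ K = T; can_T sends the class represented by an object (e, x) of el(φ) together with a cocone (t_c : T c → e)_{c∈𝒞} to the lift c ↦ (T c, φ(t_c)(x)). Then: can_T is surjective for every finite category 𝒞 and every functor T : 𝒞 ⥤ E if and only if every finite diagram in el(φ) admits a cocone; and can_T is injective for every finite 𝒞 and every T if and only if any two cocones over the same finite diagram in el(φ) are connected by a finite zig-zag of morphisms of cocones. -/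

import Mathlib

open CategoryTheory CategoryTheory.Limits Opposite
namespace Paper
abbrev elCat {E : Type} [SmallCategory E] (φ : Eᵒᵖ ⥤ Type) : Type :=
  (Functor.Elements φ)ᵒᵖ
def elProj {E : Type} [SmallCategory E] (φ : Eᵒᵖ ⥤ Type) : elCat φ ⥤ E :=
  (CategoryOfElements.π φ).leftOp
def elObj {E : Type} [SmallCategory E] (φ : Eᵒᵖ ⥤ Type) (e : E) (x : φ.obj (op e)) :
    elCat φ :=
  op ⟨op e, x⟩
noncomputable def wColim {E : Type} [SmallCategory E] (φ : Eᵒᵖ ⥤ Type) :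
    (E ⥤ Type) ⥤ Type :=
  (Functor.whiskeringLeft (elCat φ) E Type).obj (elProj φ) ⋙ colim
def coconesFunctor {D E : Type} [SmallCategory D] [SmallCategory E] (T : D ⥤ E) :
    E ⥤ Type :=
  Functor.const D ⋙ coyoneda.obj (op T)

/-- A functor `C ⥤ el(φ)` lifting the data `c ↦ (T c, y c)`. -/
def liftAux {E C : Type} [SmallCategory E] [SmallCategory C] (φ : Eᵒᵖ ⥤ Type)
    (T : C ⥤ E) (y : ∀ c : C, φ.obj (op (T.obj c)))
    (hy : ∀ (c c' : C) (m : c ⟶ c'), φ.map (T.map m).op (y c') = y c) :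
    C ⥤ elCat φ where
  obj c := elObj φ (T.obj c) (y c)
  map {c c'} m := (CategoryOfElements.homMk _ _ (T.map m).op (hy c c' m)).op
  map_id c := by
    apply Quiver.Hom.unop_inj
    apply CategoryOfElements.ext
    simp [elObj]
    rfl
  map_comp {c c' c''} m m' := by
    apply Quiver.Hom.unop_inj
    apply CategoryOfElements.ext
    simp [elObj]
    rfl

theorem liftAux_congr {E C : Type} [SmallCategory E] [SmallCategory C]
    (φ : Eᵒᵖ ⥤ Type) (T : C ⥤ E) {y y' : ∀ c : C, φ.obj (op (T.obj c))}
    (h : y = y')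
    (hy : ∀ (c c' : C) (m : c ⟶ c'), φ.map (T.map m).op (y c') = y c)
    (hy' : ∀ (c c' : C) (m : c ⟶ c'), φ.map (T.map m).op (y' c') = y' c) :
    liftAux φ T y hy = liftAux φ T y' hy' := by
  subst h; rfl

theorem liftAux_factors {E C : Type} [SmallCategory E] [SmallCategory C]
    (φ : Eᵒᵖ ⥤ Type) (T : C ⥤ E) (y : ∀ c : C, φ.obj (op (T.obj c)))
    (hy : ∀ (c c' : C) (m : c ⟶ c'), φ.map (T.map m).op (y c') = y c) :
    liftAux φ T y hy ⋙ elProj φ = T := rfl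

/-- The type of lifts of `T : C ⥤ E` through `p : el(φ) ⥤ E`. -/
def Lifts {E C : Type} [SmallCategory E] [SmallCategory C] (φ : Eᵒᵖ ⥤ Type)
    (T : C ⥤ E) : Type :=
  {K : C ⥤ elCat φ // K ⋙ elProj φ = T}

/-- The cocone defining the canonical map `Colim_φ(e ↦ Cocones(T,e)) → Lifts(T)`. -/
def canLiftCocone {E C : Type} [SmallCategory E] [SmallCategory C]
    (φ : Eᵒᵖ ⥤ Type) (T : C ⥤ E) :
    Cocone (elProj φ ⋙ coconesFunctor T) where
  pt := Lifts φ T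
  ι :=
    { app := fun j => TypeCat.ofHom fun t =>
        ⟨liftAux φ T (fun c => φ.map (t.app c).op j.unop.2)
          (fun c c' m => by
            change (T ⟶ (Functor.const C).obj ((elProj φ).obj j)) at t
            have h := t.naturality m
            simp only [Functor.const_obj_map, Category.comp_id] at h
            erw [← Functor.map_comp_apply, ← op_comp, h, Category.comp_id]),
          liftAux_factors _ _ _ _⟩
      naturality := fun j j' f => by
        ext t
        change (T ⟶ (Functor.const C).obj ((elProj φ).obj j)) at t
        apply Subtype.ext
        dsimp [coconesFunctor]
        apply liftAux_congr
        funext c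
        dsimp [elProj, Functor.leftOp]
        change φ.map ((t.app c ≫ (f.unop.1.unop)).op) j'.unop.2 = _
        erw [op_comp, Functor.map_comp_apply, f.unop.property]
        rfl }

/-- The canonical map `can_T : Colim_φ(e ↦ Cocones(T, e)) → Lifts(T)`, sending the
class of `((e,x), (t_c : T c ⟶ e))` to the lift `c ↦ (T c, φ(t_c)(x))`. -/
noncomputable def canLift {E C : Type} [SmallCategory E] [SmallCategory C]
    (φ : Eᵒᵖ ⥤ Type) (T : C ⥤ E) :
    (wColim φ).obj (coconesFunctor T) → Lifts φ T :=
  fun x => colimit.desc (elProj φ ⋙ coconesFunctor T) (canLiftCocone φ T) x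

/-!
Fix `K : 𝒞 ⥤ el(φ)` and put `T = K ⋙ p`. The elements of `Colim_φ(Cocones(T, -))` are classes
of pairs `(j, t)` with `j ∈ el(φ)` and `t` a cocone on `T` with vertex `p j`; `can_T` sends such
a class to `K` exactly when every leg `t_c` lifts to a morphism `K c ⟶ j` of `el(φ)`, i.e. when
`(j, t)` is the image under `p` of a cocone on `K`. Since `p` is faithful, morphisms between such
pairs are exactly morphisms of cocones on `K`, and two pairs have the same class iff they are
zigzag-connected. So the fibre of `can_T` over `K` is the set of connected components of the
category of cocones on `K`: it is nonempty iff `K` has a cocone, and a subsingleton iff all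
cocones on `K` are zigzag-connected.
-/

universe u v

theorem colimit_ι_coyoneda_eq_iff_zigzag {J : Type v} [SmallCategory J] {D : Type u}
    [Category.{v} D] {F : J ⥤ D} {d : D} {a b : StructuredArrow d F} :
    colimit.ι (F ⋙ coyoneda.obj (op d)) a.right a.hom =
      colimit.ι (F ⋙ coyoneda.obj (op d)) b.right b.hom ↔ Zigzag a b := by
  refine ⟨fun h => Functor.Final.zigzag_of_eqvGen_colimitTypeRel (Types.colimit_eq h),
    fun h => ?_⟩
  induction h with
  | refl => rfl
  | tail _ hzag ih =>
    refine ih.trans ?_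
    rcases hzag with ⟨⟨f⟩⟩ | ⟨⟨f⟩⟩
    · exact Types.colimit_sound f.right (StructuredArrow.w f)
    · exact (Types.colimit_sound f.right (StructuredArrow.w f)).symm

theorem zigzag_of_zigzag_obj {J D : Type*} [Category J] [Category D] (F : J ⥤ D) [F.Full]
    (hF : ∀ j k, Zag (F.obj j) k → ∃ j', F.obj j' = k) {j₁ j₂ : J}
    (h : Zigzag (F.obj j₁) (F.obj j₂)) : Zigzag j₁ j₂ := by
  suffices ∀ k, Zigzag (F.obj j₁) k → ∀ j, F.obj j = k → Zigzag j₁ j from this _ h j₂ rfl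
  intro k hk
  induction hk with
  | refl => exact fun j hj => Zigzag.of_hom (F.preimage (eqToHom hj.symm))
  | tail _ hzag ih =>
    rintro j' rfl
    obtain ⟨j, rfl⟩ := hF j' _ hzag.symm
    exact (ih j rfl).trans (.of_zag (zag_of_zag_obj F hzag))

theorem functor_ext_of_comp_faithful {C D E : Type*} [Category C] [Category D] [Category E]
    (p : D ⥤ E) [p.Faithful] {K K' : C ⥤ D} (hobj : ∀ c, K.obj c = K'.obj c)
    (h : K ⋙ p = K' ⋙ p) : K = K' :=
  CategoryTheory.Functor.ext hobj fun _ _ m =>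
    p.map_injective (by simpa [eqToHom_map] using Functor.congr_hom h m)

def coconeToStructuredArrow {C D E : Type*} [Category C] [Category D] [Category E]
    (p : D ⥤ E) (K : C ⥤ D) : Cocone K ⥤ StructuredArrow (K ⋙ p) (p ⋙ Functor.const C) where
  obj s := StructuredArrow.mk (p.mapCocone s).ι
  map f := StructuredArrow.homMk f.hom (by ext c; simp [← p.map_comp])

instance {C D E : Type*} [Category C] [Category D] [Category E]
    (p : D ⥤ E) [p.Faithful] (K : C ⥤ D) : (coconeToStructuredArrow p K).Full where
  map_surjective {s s'} g :=
    ⟨{ hom := g.right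
       w c := p.map_injective ((p.map_comp _ _).trans (congr_app (StructuredArrow.w g) c)) },
      by ext; rfl⟩

section Elements

variable {E C : Type} [SmallCategory E] [SmallCategory C] (φ : Eᵒᵖ ⥤ Type)

instance : (elProj φ).Faithful := inferInstanceAs (CategoryOfElements.π φ).leftOp.Faithful

/-- `StructuredArrow T (p ⋙ const 𝒞)` is the category of elements of `e ↦ Cocones(T, e)`
restricted along `p`, so its objects represent the elements of `Colim_φ(Cocones(T, -))`. -/
noncomputable abbrev coconeClass {T : C ⥤ E}
    (a : StructuredArrow T (elProj φ ⋙ Functor.const C)) : (wColim φ).obj (coconesFunctor T) :=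
  colimit.ι ((elProj φ ⋙ Functor.const C) ⋙ coyoneda.obj (op T)) a.right a.hom

theorem exists_coconeClass_eq {T : C ⥤ E} (x : (wColim φ).obj (coconesFunctor T)) :
    ∃ a, coconeClass φ a = x := by
  obtain ⟨j, t, rfl⟩ := Types.jointly_surjective' (F := elProj φ ⋙ coconesFunctor T) x
  exact ⟨StructuredArrow.mk t, rfl⟩

theorem canLift_coconeClass {T : C ⥤ E} (a : StructuredArrow T (elProj φ ⋙ Functor.const C)) :
    canLift φ T (coconeClass φ a) = (canLiftCocone φ T).ι.app a.right a.hom :=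
  colimit.ι_desc_apply _ _ _

variable (K : C ⥤ elCat φ)

theorem canLift_coconeClass_eq_iff
    (a : StructuredArrow (K ⋙ elProj φ) (elProj φ ⋙ Functor.const C)) :
    canLift φ _ (coconeClass φ a) = ⟨K, rfl⟩ ↔
      ∀ c, φ.map (a.hom.app c).op a.right.unop.2 = (K.obj c).unop.2 := by
  rw [canLift_coconeClass]
  refine Subtype.ext_iff.trans
    ⟨fun h c => eq_of_heq (Sigma.mk.inj_iff.1 (congrArg unop (Functor.congr_obj h c))).2,
      fun h => functor_ext_of_comp_faithful (elProj φ)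
        (fun c => congrArg op (Sigma.ext rfl (heq_of_eq (h c)))) rfl⟩

def coconeOfLift (a : StructuredArrow (K ⋙ elProj φ) (elProj φ ⋙ Functor.const C))
    (h : ∀ c, φ.map (a.hom.app c).op a.right.unop.2 = (K.obj c).unop.2) : Cocone K where
  pt := a.right
  ι :=
    { app c := (CategoryOfElements.homMk _ _ (a.hom.app c).op (h c)).op
      naturality c c' m := (elProj φ).map_injective (by
        have := a.hom.naturality m
        simp only [Functor.map_comp, Functor.const_obj_map] at this ⊢
        exact this) }

theorem canLift_coconeClass_eq_iff_exists_cocone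
    (a : StructuredArrow (K ⋙ elProj φ) (elProj φ ⋙ Functor.const C)) :
    canLift φ _ (coconeClass φ a) = ⟨K, rfl⟩ ↔
      ∃ s : Cocone K, (coconeToStructuredArrow (elProj φ) K).obj s = a := by
  rw [canLift_coconeClass_eq_iff]
  refine ⟨fun h => ⟨coconeOfLift φ K a h, rfl⟩, ?_⟩
  rintro ⟨s, rfl⟩ c
  exact (s.ι.app c).unop.2

theorem nonempty_canLift_fiber_iff :
    (canLift φ (K ⋙ elProj φ) ⁻¹' {⟨K, rfl⟩}).Nonempty ↔ Nonempty (Cocone K) := by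
  constructor
  · rintro ⟨x, hx⟩
    obtain ⟨a, rfl⟩ := exists_coconeClass_eq φ x
    obtain ⟨s, -⟩ := (canLift_coconeClass_eq_iff_exists_cocone φ K a).1 hx
    exact ⟨s⟩
  · rintro ⟨s⟩
    exact ⟨_, (canLift_coconeClass_eq_iff_exists_cocone φ K _).2 ⟨s, rfl⟩⟩

theorem subsingleton_canLift_fiber_iff :
    (canLift φ (K ⋙ elProj φ) ⁻¹' {⟨K, rfl⟩}).Subsingleton ↔ ∀ s s' : Cocone K, Zigzag s s' := by
  let Φ := coconeToStructuredArrow (elProj φ) K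
  have hfib (s : Cocone K) : canLift φ _ (coconeClass φ (Φ.obj s)) = ⟨K, rfl⟩ :=
    (canLift_coconeClass_eq_iff_exists_cocone φ K _).2 ⟨s, rfl⟩
  constructor
  · intro hsub s s'
    refine zigzag_of_zigzag_obj Φ (fun s a hzag => ?_) ?_
    · refine (canLift_coconeClass_eq_iff_exists_cocone φ K a).1 ?_
      rw [← hfib s]
      exact congrArg _ (colimit_ι_coyoneda_eq_iff_zigzag.2 (Zigzag.of_zag hzag)).symm
    · exact colimit_ι_coyoneda_eq_iff_zigzag.1 (hsub (hfib s) (hfib s'))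
  · intro hzig x hx x' hx'
    obtain ⟨a, rfl⟩ := exists_coconeClass_eq φ x
    obtain ⟨a', rfl⟩ := exists_coconeClass_eq φ x'
    obtain ⟨s, rfl⟩ := (canLift_coconeClass_eq_iff_exists_cocone φ K a).1 hx
    obtain ⟨s', rfl⟩ := (canLift_coconeClass_eq_iff_exists_cocone φ K a').1 hx'
    exact colimit_ι_coyoneda_eq_iff_zigzag.2 (zigzag_obj_of_zigzag Φ (hzig s s'))

end Elements

/-- The canonical maps
`can_T : Colim_φ(e ↦ Cocones(T,e)) → Lifts(T)` are surjective for all finite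
categories `𝒞` and all `T : 𝒞 ⥤ E` iff every finite diagram in `el(φ)` admits a
cocone; and they are injective for all finite `𝒞` and `T` iff any two cocones
over the same finite diagram in `el(φ)` are connected by a finite zig-zag. -/
theorem canLift_surjective_injective_iff (E : Type) [SmallCategory E]
    (φ : Eᵒᵖ ⥤ Type) :
    ((∀ (C : Type) [SmallCategory C] [FinCategory C] (T : C ⥤ E),
        Function.Surjective (canLift φ T)) ↔
      (∀ (C : Type) [SmallCategory C] [FinCategory C] (K : C ⥤ elCat φ),
        Nonempty (Cocone K))) ∧
    ((∀ (C : Type) [SmallCategory C] [FinCategory C] (T : C ⥤ E),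
        Function.Injective (canLift φ T)) ↔
      (∀ (C : Type) [SmallCategory C] [FinCategory C] (K : C ⥤ elCat φ)
        (c c' : Cocone K), Zigzag c c')) := by
  refine ⟨⟨fun hsurj C _ _ K => ?_, fun hcocone C _ _ T => ?_⟩,
    ⟨fun hinj C _ _ K => ?_, fun hzigzag C _ _ T => ?_⟩⟩
  · exact (nonempty_canLift_fiber_iff φ K).1 (hsurj C _ ⟨K, rfl⟩)
  · rintro ⟨K, rfl⟩
    exact (nonempty_canLift_fiber_iff φ K).2 (hcocone C K)
  · exact (subsingleton_canLift_fiber_iff φ K).1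
      (Set.subsingleton_singleton.preimage (hinj C _))
  · intro x x' h
    rcases hx : canLift φ T x with ⟨K, rfl⟩
    exact (subsingleton_canLift_fiber_iff φ K).2 (hzigzag C K) hx (h.symm.trans hx)

end Paper
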